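/- arXiv:2404.05319 — 3 statements merged into one kernel-verified Lean document; each statement's English description precedes it below -/
import Mathlib

section
/- Let V_1 : H^X → H^{X'} ⊗ H^Y and V_2 : H^Y ⊗ H^Z → H^{Z'} be linear maps between finite-dimensional Hilbert spaces, and let V = (1^{X'} ⊗ V_2)(V_1 ⊗ 1^Z) : H^X ⊗ H^Z → H^{X'} ⊗ H^{Z'}. Then the Choi vector of V equals the link product of the Choi vectors of V_1 and V_2: |V⟩⟩ = |V_1⟩⟩ * |V_2⟩⟩. -/
/-- Coordinate Choi vector of a linear map `W : H^A → H^B` given as a matrix: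
`|W⟩⟩ = Σ_i |i⟩ ⊗ W|i⟩`, so its component at `(i, j)` is `⟨j|W|i⟩ = W j i`. -/
noncomputable def choiVec {A B : Type*} (W : Matrix B A ℂ) : A × B → ℂ :=
  fun p => W p.2 p.1

/-- The link product of coordinate vectors over a shared space `H^Y`. -/
noncomputable def linkVec {X Y Z : Type*} [Fintype Y] (a : X × Y → ℂ) (b : Y × Z → ℂ) :
    X × Z → ℂ :=
  fun p => ∑ y : Y, a (p.1, y) * b (y, p.2)

/-! The Choi vector of a composite `V = V₂ V₁` is the link product `|V₁⟩⟩ * |V₂⟩⟩` over the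
intermediate space. Applied to `V = (1 ⊗ V₂)(V₁ ⊗ 1)`, the link runs over `X' × Y × Z`, and the
Kronecker deltas contributed by the two identity factors collapse it to the link over `Y`. -/

theorem choiVec_mul {A B C : Type*} [Fintype B] (W₁ : Matrix B A ℂ) (W₂ : Matrix C B ℂ) :
    choiVec (W₂ * W₁) = linkVec (choiVec W₁) (choiVec W₂) := by
  funext p
  simp only [choiVec, linkVec, Matrix.mul_apply, mul_comm]

theorem stmt6_general {X X' Y Z Z' : Type*} [Fintype X'] [Fintype Y]
    [Fintype Z] [DecidableEq X'] [DecidableEq Z]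
    (V1 : Matrix (X' × Y) X ℂ) (V2 : Matrix Z' (Y × Z) ℂ) :
    choiVec
        (Matrix.kroneckerMap (· * ·) (1 : Matrix X' X' ℂ) V2 *
          (Matrix.kroneckerMap (· * ·) V1 (1 : Matrix Z Z ℂ)).submatrix
            (Equiv.prodAssoc X' Y Z).symm id) =
      fun p : (X × Z) × (X' × Z') =>
        linkVec (fun q : (X × X') × Y => choiVec V1 (q.1.1, (q.1.2, q.2)))
          (fun q : Y × (Z × Z') => choiVec V2 ((q.1, q.2.1), q.2.2))
          ((p.1.1, p.2.1), (p.1.2, p.2.2)) := by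
  rw [choiVec_mul]
  funext ⟨⟨x, z⟩, x', z'⟩
  simp only [linkVec, choiVec, Fintype.sum_prod_type, Matrix.submatrix_apply,
    Matrix.kroneckerMap_apply, Equiv.prodAssoc_symm_apply, id, Matrix.one_apply, mul_ite, ite_mul,
    one_mul, mul_one, mul_zero, zero_mul, Finset.sum_ite_irrel, Finset.sum_const_zero,
    Finset.sum_ite_eq, Finset.sum_ite_eq', Finset.mem_univ, if_true]

/-- For `V₁ : H^X → H^{X'} ⊗ H^Y`, `V₂ : H^Y ⊗ H^Z → H^{Z'}` and
`V = (1^{X'} ⊗ V₂)(V₁ ⊗ 1^Z)`, the Choi vector of `V` is the link product of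
the Choi vectors of `V₁` and `V₂` (up to the canonical regrouping of tensor
factors). -/
theorem stmt6 {X X' Y Z Z' : Type*} [Fintype X] [Fintype X'] [Fintype Y]
    [Fintype Z] [Fintype Z'] [DecidableEq X'] [DecidableEq Z]
    (V1 : Matrix (X' × Y) X ℂ) (V2 : Matrix Z' (Y × Z) ℂ) :
    choiVec
        (Matrix.kroneckerMap (· * ·) (1 : Matrix X' X' ℂ) V2 *
          (Matrix.kroneckerMap (· * ·) V1 (1 : Matrix Z Z ℂ)).submatrix
            (Equiv.prodAssoc X' Y Z).symm id) =
      fun p : (X × Z) × (X' × Z') =>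
        linkVec (fun q : (X × X') × Y => choiVec V1 (q.1.1, (q.1.2, q.2)))
          (fun q : Y × (Z × Z') => choiVec V2 ((q.1, q.2.1), q.2.2))
          ((p.1.1, p.2.1), (p.1.2, p.2.2)) :=
  stmt6_general V1 V2
end

section
/- Let M_A : L(H^A) → L(H^C) and M_B : L(H^B) → L(H^D) be linear maps on operators over finite-dimensional Hilbert spaces with H^B ≅ H^C via a chosen basis identification. Define the loop composition M^{C→B}(ρ) := Σ_{k,l} ⟨k|^C (M_A ⊗ M_B)(ρ ⊗ |k⟩⟨l|^B) |l⟩^C for ρ ∈ L(H^A). Then the Choi matrix of M^{C→B} equals the link product of the Choi matrices of M_A and M_B: M^{C→B} = M_A * M_B, where the link product contracts over the identified space H^B = H^C. -/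
/-!
Both sides are computed entrywise. The Choi matrix records `M` through its values on the matrix
units, `choiMat M (x, y) (x', y') = M (single x x' 1) y y'`, and the partial transpose in the
link product turns its `Y`-contraction into `∑ y y', A (x, y) (x', y') * B (y, z) (y', z')`.
Unfolding the loop composition at `ρ = single a a' 1` gives the same double sum, with the
`(k, l)` entry of `M_A ρ` paired with `M_B (single k l 1)`.
-/

/-- The Choi matrix of a map `M : L(H^X) → L(H^Y)`:
`(I ⊗ M)(|1⟩⟩⟨⟨1|) = Σ_{i,i'} |i⟩⟨i'| ⊗ M(|i⟩⟨i'|)`. -/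
noncomputable def choiMat {X Y : Type*} [Fintype X] [DecidableEq X]
    (M : Matrix X X ℂ → Matrix Y Y ℂ) : Matrix (X × Y) (X × Y) ℂ :=
  ∑ i : X, ∑ i' : X,
    Matrix.kroneckerMap (· * ·) (Matrix.single i i' (1 : ℂ))
      (M (Matrix.single i i' (1 : ℂ)))

/-- The loop composition
`M^{C→B}(ρ) := Σ_{k,l} ⟨k|^C (M_A ⊗ M_B)(ρ ⊗ |k⟩⟨l|^B) |l⟩^C`, where `H^B`
is identified with `H^C` (same index type in the chosen basis). -/
noncomputable def loopComp {A C D : Type*} [Fintype C] [DecidableEq C]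
    (MA : Matrix A A ℂ → Matrix C C ℂ) (MB : Matrix C C ℂ → Matrix D D ℂ) :
    Matrix A A ℂ → Matrix D D ℂ :=
  fun ρ => ∑ k : C, ∑ l : C, MA ρ k l • MB (Matrix.single k l (1 : ℂ))

/-- Partial transpose on the second tensor factor `H^Y` (in the fixed basis). -/
noncomputable def ptY {X Y : Type*} (A : Matrix (X × Y) (X × Y) ℂ) : Matrix (X × Y) (X × Y) ℂ :=
  Matrix.of fun p q => A (p.1, q.2) (q.1, p.2)

/-- Link product of operators, `A * B := Tr_Y[(A^{T_Y} ⊗ 1^Z)(1^X ⊗ B)]`. -/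
noncomputable def linkMat {X Y Z : Type*} [Fintype X] [Fintype Y] [Fintype Z]
    [DecidableEq X] [DecidableEq Z]
    (A : Matrix (X × Y) (X × Y) ℂ) (B : Matrix (Y × Z) (Y × Z) ℂ) :
    Matrix (X × Z) (X × Z) ℂ :=
  Matrix.of fun p q => ∑ y : Y,
    ((Matrix.kroneckerMap (· * ·) (ptY A) (1 : Matrix Z Z ℂ)).submatrix
        (fun r : X × Y × Z => ((r.1, r.2.1), r.2.2))
        (fun r : X × Y × Z => ((r.1, r.2.1), r.2.2)) *
      Matrix.kroneckerMap (· * ·) (1 : Matrix X X ℂ) B)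
      (p.1, (y, p.2)) (q.1, (y, q.2))

open Matrix

lemma choiMat_apply {X Y : Type*} [Fintype X] [DecidableEq X]
    (M : Matrix X X ℂ → Matrix Y Y ℂ) (x x' : X) (y y' : Y) :
    choiMat M (x, y) (x', y') = M (single x x' 1) y y' := by
  simp [choiMat, Matrix.sum_apply, single, ite_and]

lemma linkMat_apply {X Y Z : Type*} [Fintype X] [Fintype Y] [Fintype Z]
    [DecidableEq X] [DecidableEq Z]
    (A : Matrix (X × Y) (X × Y) ℂ) (B : Matrix (Y × Z) (Y × Z) ℂ) (x x' : X) (z z' : Z) :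
    linkMat A B (x, z) (x', z') = ∑ y : Y, ∑ y' : Y, A (x, y) (x', y') * B (y, z) (y', z') := by
  simp only [linkMat, ptY, of_apply, mul_apply, submatrix_apply, kroneckerMap_apply,
    Fintype.sum_prod_type, one_apply, mul_ite, ite_mul, mul_one, one_mul, mul_zero, zero_mul,
    Finset.sum_ite_irrel, Finset.sum_const_zero, Finset.sum_ite_eq, Finset.sum_ite_eq',
    Finset.mem_univ, if_true]
  exact Finset.sum_comm

lemma choiMat_loopComp {A C D : Type*} [Fintype A] [DecidableEq A] [Fintype C] [DecidableEq C]
    [Fintype D] [DecidableEq D] (MA : Matrix A A ℂ → Matrix C C ℂ)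
    (MB : Matrix C C ℂ → Matrix D D ℂ) :
    choiMat (loopComp MA MB) = linkMat (choiMat MA) (choiMat MB) := by
  ext ⟨a, d⟩ ⟨a', d'⟩
  simp only [choiMat_apply, linkMat_apply, loopComp, Matrix.sum_apply, Matrix.smul_apply,
    smul_eq_mul]

/-- The Choi matrix of the loop composition `M^{C→B}` equals the link product of
the Choi matrices of `M_A` and `M_B`, contracted over the identified space
`H^B = H^C`. -/
theorem stmt8 {A C D : Type*} [Fintype A] [DecidableEq A] [Fintype C]
    [DecidableEq C] [Fintype D] [DecidableEq D]
    (MA : Matrix A A ℂ →ₗ[ℂ] Matrix C C ℂ) (MB : Matrix C C ℂ →ₗ[ℂ] Matrix D D ℂ) :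
    choiMat (loopComp (⇑MA) (⇑MB)) = linkMat (choiMat ⇑MA) (choiMat ⇑MB) :=
  choiMat_loopComp MA MB
end

section
/- Let H^X, H^Y, H^Z be finite-dimensional Hilbert spaces and A ∈ L(H^X ⊗ H^Y), B ∈ L(H^Y ⊗ H^Z) with link product A * B := Tr_Y[(A^{T_Y} ⊗ 1^Z)(1^X ⊗ B)]. If A and B are positive semidefinite, then A * B is positive semidefinite. -/
/-!
Write `A = C†C` and `B = D†D`. Expanding the link product entrywise, the partial transpose lines
the indices up so that `A * B = E†E`, where `E = (C ⊗ D)(1^X ⊗ |Ω⟩ ⊗ 1^Z)` and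
`|Ω⟩ = ∑_y |y⟩|y⟩` is the unnormalised maximally entangled vector on `H^Y ⊗ H^Y`.
-/

open scoped ComplexOrder

open Matrix

theorem Matrix.PosSemidef.exists_eq_conjTranspose_mul_self {n 𝕜 : Type*} [RCLike 𝕜] [Fintype n]
    {A : Matrix n n 𝕜} (hA : A.PosSemidef) : ∃ C : Matrix n n 𝕜, A = Cᴴ * C := by
  classical
  open scoped MatrixOrder Matrix.Norms.L2Operator in
  exact CStarAlgebra.nonneg_iff_eq_star_mul_self.mp hA.nonneg

section LinkProduct

variable {K M X Y Z : Type*} [Fintype X] [Fintype Y] [Fintype Z] [DecidableEq X] [DecidableEq Z]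

lemma linkMat_apply_s9 (A : Matrix (X × Y) (X × Y) ℂ) (B : Matrix (Y × Z) (Y × Z) ℂ) (p q : X × Z) :
    linkMat A B p q = ∑ y, ∑ y', A (p.1, y') (q.1, y) * B (y', p.2) (y, q.2) := by
  simp [linkMat, mul_apply, one_apply, ptY, Fintype.sum_prod_type, mul_comm]

def linkFactor (C : Matrix K (X × Y) ℂ) (D : Matrix M (Y × Z) ℂ) : Matrix (K × M) (X × Z) ℂ :=
  of fun km xz => ∑ y, C km.1 (xz.1, y) * D km.2 (y, xz.2)

lemma linkMat_conjTranspose_mul_self [Fintype K] [Fintype M]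
    (C : Matrix K (X × Y) ℂ) (D : Matrix M (Y × Z) ℂ) :
    linkMat (Cᴴ * C) (Dᴴ * D) = (linkFactor C D)ᴴ * linkFactor C D := by
  ext p q
  simp only [linkMat_apply_s9, mul_apply, conjTranspose_apply, linkFactor, of_apply, star_sum,
    star_mul', Finset.sum_mul_sum, Fintype.sum_prod_type]
  simp_rw [Finset.sum_comm (s := (Finset.univ : Finset Y)) (t := (Finset.univ : Finset K)),
    Finset.sum_comm (s := (Finset.univ : Finset Y)) (t := (Finset.univ : Finset M))]
  refine Fintype.sum_congr _ _ fun k => Fintype.sum_congr _ _ fun m => ?_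
  rw [Finset.sum_comm]
  exact Fintype.sum_congr _ _ fun y' => Fintype.sum_congr _ _ fun y => mul_mul_mul_comm ..

end LinkProduct

/-- The link product of positive semidefinite operators is positive
semidefinite. -/
theorem stmt9 {X Y Z : Type*} [Fintype X] [Fintype Y] [Fintype Z]
    [DecidableEq X] [DecidableEq Z]
    (A : Matrix (X × Y) (X × Y) ℂ) (B : Matrix (Y × Z) (Y × Z) ℂ)
    (hA : A.PosSemidef) (hB : B.PosSemidef) :
    (linkMat A B).PosSemidef := by
  obtain ⟨C, rfl⟩ := hA.exists_eq_conjTranspose_mul_self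
  obtain ⟨D, rfl⟩ := hB.exists_eq_conjTranspose_mul_self
  rw [linkMat_conjTranspose_mul_self]
  exact posSemidef_conjTranspose_mul_self _
end
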